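/- Let α : 𝔽₂ⁿ → 𝔽₂ be a cubic form and A ⊆ 𝔽₂ⁿ a nonempty subset such that α(x + x') = 1 for all distinct x, x' ∈ A. Then, writing r = |A| and N = 2ⁿ, there exists a bilinear map c : ℝʳ × ℝᴺ → ℝᴺ such that ‖c(a,b)‖² = ‖a‖² · ‖b‖² for all a ∈ ℝʳ and b ∈ ℝᴺ, where ‖·‖ denotes the Euclidean norm. (Existence of a sum-of-squares identity of size [|A|, 2ⁿ, 2ⁿ].) -/

import Mathlib

/-!
Identify `ℝ^{2ⁿ}` with the functions `𝔽₂ⁿ → ℝ`. To `x ∈ A` attach the signed shift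
`(M_x b)(y) = (-1)^{q(x, y)} b(x + y)`, where `q(x, y)` is the polarisation of `α` (quadratic
in `x`, linear in `y`). Every `M_x` is orthogonal, and for `x ≠ x'` the substitution
`y ↦ y + x + x'` exchanges the two shifts in `⟪M_x b, M_x' b⟫` while changing the sign by
`(-1)^{α(x + x')} = -1`, so this inner product vanishes. Hence `c(a, b) = Σ_x a_x M_x b` is a
sum-of-squares identity by Pythagoras.
-/

open Finset

/-- A cubic form on `𝔽₂ⁿ`: a function of the form
`α(x) = Σ_{1 ≤ i ≤ j ≤ k ≤ n} α_{ijk} x_i x_j x_k` with coefficients in `𝔽₂`. -/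
def IsCubicForm {n : ℕ} (α : (Fin n → ZMod 2) → ZMod 2) : Prop :=
  ∃ c : Fin n → Fin n → Fin n → ZMod 2,
    ∀ x, α x = ∑ i, ∑ j, ∑ k, if i ≤ j ∧ j ≤ k then c i j k * x i * x j * x k else 0

section SquareIdentity

variable {ι κ μ : Type*} [Fintype ι] [Fintype κ] [Fintype μ]

def IsSquareIdentity (c : (ι → ℝ) →ₗ[ℝ] (κ → ℝ) →ₗ[ℝ] (μ → ℝ)) : Prop :=
  ∀ a b, ∑ k, (c a b k) ^ 2 = (∑ i, a i ^ 2) * ∑ j, b j ^ 2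

theorem IsSquareIdentity.reindex {ι' κ' μ' : Type*} [Fintype ι'] [Fintype κ'] [Fintype μ']
    {c : (ι → ℝ) →ₗ[ℝ] (κ → ℝ) →ₗ[ℝ] (μ → ℝ)} (hc : IsSquareIdentity c)
    (e₁ : ι ≃ ι') (e₂ : κ ≃ κ') (e₃ : μ ≃ μ') :
    IsSquareIdentity (((c ∘ₗ LinearMap.funLeft ℝ ℝ e₁).compl₂ (LinearMap.funLeft ℝ ℝ e₂)).compr₂
      (LinearMap.funLeft ℝ ℝ e₃.symm)) := by
  intro a b
  simp only [LinearMap.compr₂_apply, LinearMap.compl₂_apply, LinearMap.comp_apply,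
    LinearMap.funLeft_apply]
  rw [Equiv.sum_comp e₃.symm (fun k => c (LinearMap.funLeft ℝ ℝ e₁ a)
    (LinearMap.funLeft ℝ ℝ e₂ b) k ^ 2), hc]
  simp only [LinearMap.funLeft_apply]
  rw [Equiv.sum_comp e₁ (fun i => a i ^ 2), Equiv.sum_comp e₂ (fun j => b j ^ 2)]

theorem sum_sq_sum_mul_of_pairwise_orthogonal (f : ι → μ → ℝ) (s : ℝ)
    (hnorm : ∀ i, ∑ k, f i k ^ 2 = s) (horth : Pairwise fun i j => ∑ k, f i k * f j k = 0)
    (a : ι → ℝ) : ∑ k, (∑ i, a i * f i k) ^ 2 = (∑ i, a i ^ 2) * s := by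
  calc ∑ k, (∑ i, a i * f i k) ^ 2
      = ∑ i, ∑ j, a i * a j * ∑ k, f i k * f j k := by
        simp only [sq, sum_mul_sum]
        simp only [mul_sum]
        rw [sum_comm]
        refine sum_congr rfl fun i _ => ?_
        rw [sum_comm]
        exact sum_congr rfl fun j _ => sum_congr rfl fun k _ => by ring
    _ = ∑ i, a i * a i * ∑ k, f i k * f i k :=
        sum_congr rfl fun i _ =>
          sum_eq_single i (fun j _ hji => by rw [horth hji.symm, mul_zero]) (by simp)
    _ = (∑ i, a i ^ 2) * s := by simp only [← sq, hnorm, sum_mul]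

end SquareIdentity

noncomputable def zmodTwoSign (z : ZMod 2) : ℝ := (-1) ^ z.val

theorem zmodTwoSign_add (z z' : ZMod 2) :
    zmodTwoSign (z + z') = zmodTwoSign z * zmodTwoSign z' := by
  rw [zmodTwoSign, ZMod.val_add, ← neg_one_pow_eq_pow_mod_two, pow_add]
  rfl

theorem zmodTwoSign_one : zmodTwoSign 1 = -1 := pow_one _

theorem zmodTwoSign_sq (z : ZMod 2) : zmodTwoSign z ^ 2 = 1 := by
  rw [zmodTwoSign, ← pow_mul, pow_mul', neg_one_sq, one_pow]

section SignedShift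

variable {V : Type*} [AddCommGroup V]

noncomputable def signedShift (σ : V → ZMod 2) (x : V) : (V → ℝ) →ₗ[ℝ] (V → ℝ) :=
  LinearMap.mulLeft ℝ (fun y => zmodTwoSign (σ y)) ∘ₗ LinearMap.funLeft ℝ ℝ (x + ·)

theorem signedShift_apply (σ : V → ZMod 2) (x : V) (b : V → ℝ) (y : V) :
    signedShift σ x b y = zmodTwoSign (σ y) * b (x + y) := rfl

variable [Fintype V]

theorem sum_sq_signedShift (σ : V → ZMod 2) (x : V) (b : V → ℝ) :
    ∑ y, signedShift σ x b y ^ 2 = ∑ y, b y ^ 2 := by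
  simp only [signedShift_apply, mul_pow, zmodTwoSign_sq, one_mul]
  exact Equiv.sum_comp (Equiv.addLeft x) (fun y => b y ^ 2)

variable [Module (ZMod 2) V]

theorem sum_signedShift_mul_signedShift {σ σ' : V → ZMod 2} {x x' : V}
    (hσ : ∀ y, σ (y + (x + x')) + σ' (y + (x + x')) = σ y + σ' y + 1) (b : V → ℝ) :
    ∑ y, signedShift σ x b y * signedShift σ' x' b y = 0 := by
  have hflip : ∀ y, signedShift σ x b (y + (x + x')) * signedShift σ' x' b (y + (x + x'))
      = -(signedShift σ x b y * signedShift σ' x' b y) := by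
    intro y
    have hx : x + (y + (x + x')) = x' + y := by
      rw [add_left_comm, ← add_assoc x x x', ZModModule.add_self, zero_add, add_comm]
    have hx' : x' + (y + (x + x')) = x + y := by
      rw [add_comm x x', add_left_comm, ← add_assoc x' x' x, ZModModule.add_self, zero_add,
        add_comm]
    have hsign := congrArg zmodTwoSign (hσ y)
    simp only [zmodTwoSign_add, zmodTwoSign_one] at hsign
    simp only [signedShift_apply, hx, hx']
    linear_combination (b (x' + y) * b (x + y)) * hsign
  have hneg := Equiv.sum_comp (Equiv.addRight (x + x'))
    (fun y => signedShift σ x b y * signedShift σ' x' b y)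
  simp only [Equiv.coe_addRight, hflip, sum_neg_distrib] at hneg
  linarith

theorem isSquareIdentity_linearCombination_signedShift {ι : Type*} [Fintype ι]
    (x : ι → V) (σ : ι → V → ZMod 2)
    (hσ : Pairwise fun i j =>
      ∀ y, σ i (y + (x i + x j)) + σ j (y + (x i + x j)) = σ i y + σ j y + 1) :
    IsSquareIdentity (Fintype.linearCombination ℝ fun i => signedShift (σ i) (x i)) := by
  intro a b
  simp only [Fintype.linearCombination_apply, LinearMap.sum_apply, LinearMap.smul_apply,
    Finset.sum_apply, Pi.smul_apply, smul_eq_mul]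
  exact sum_sq_sum_mul_of_pairwise_orthogonal _ _ (fun i => sum_sq_signedShift _ _ b)
    (fun i j hij => sum_signedShift_mul_signedShift (hσ hij) b) a

end SignedShift

section CubicForm

variable {n : ℕ} (c : Fin n → Fin n → Fin n → ZMod 2)

def cubicFormOfCoeffs (x : Fin n → ZMod 2) : ZMod 2 :=
  ∑ i, ∑ j, ∑ k, if i ≤ j ∧ j ≤ k then c i j k * x i * x j * x k else 0

def cubicPolar (x y : Fin n → ZMod 2) : ZMod 2 :=
  ∑ i, ∑ j, ∑ k, if i ≤ j ∧ j ≤ k then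
    c i j k * (x i * x j * y k + x i * x k * y j + x j * x k * y i) else 0

theorem cubicPolar_add_right (x y z : Fin n → ZMod 2) :
    cubicPolar c x (y + z) = cubicPolar c x y + cubicPolar c x z := by
  simp only [cubicPolar, ← sum_add_distrib, Pi.add_apply]
  refine sum_congr rfl fun i _ => sum_congr rfl fun j _ => sum_congr rfl fun k _ => ?_
  split_ifs <;> ring

theorem cubicPolar_add_cubicPolar_self_add (x x' : Fin n → ZMod 2) :
    cubicPolar c x (x + x') + cubicPolar c x' (x + x') = cubicFormOfCoeffs c (x + x') := by
  have monomial : ∀ m p q r p' q' r' : ZMod 2,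
      m * (p * q * (r + r') + p * r * (q + q') + q * r * (p + p'))
        + m * (p' * q' * (r + r') + p' * r' * (q + q') + q' * r' * (p + p'))
        = m * (p + p') * (q + q') * (r + r') := by decide
  simp only [cubicPolar, cubicFormOfCoeffs, ← sum_add_distrib, Pi.add_apply]
  refine sum_congr rfl fun i _ => sum_congr rfl fun j _ => sum_congr rfl fun k _ => ?_
  split_ifs
  · exact monomial ..
  · exact add_zero 0

theorem cubicPolar_add_cubicPolar_add_right (x x' y : Fin n → ZMod 2) :
    cubicPolar c x (y + (x + x')) + cubicPolar c x' (y + (x + x'))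
      = cubicPolar c x y + cubicPolar c x' y + cubicFormOfCoeffs c (x + x') := by
  rw [cubicPolar_add_right c x y, cubicPolar_add_right c x' y,
    ← cubicPolar_add_cubicPolar_self_add]
  ring

end CubicForm

theorem exists_square_identity_of_cubicForm_general
    (n : ℕ) (α : (Fin n → ZMod 2) → ZMod 2) (hα : IsCubicForm α)
    (A : Finset (Fin n → ZMod 2))
    (h : ∀ x ∈ A, ∀ x' ∈ A, x ≠ x' → α (x + x') = 1) :
    ∃ c : (Fin A.card → ℝ) →ₗ[ℝ] (Fin (2 ^ n) → ℝ) →ₗ[ℝ] (Fin (2 ^ n) → ℝ),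
      ∀ (a : Fin A.card → ℝ) (b : Fin (2 ^ n) → ℝ),
        ∑ k, (c a b k) ^ 2 = (∑ i, (a i) ^ 2) * (∑ j, (b j) ^ 2) := by
  obtain ⟨c, hc⟩ := hα
  have hσ : Pairwise fun x x' : A => ∀ y,
      cubicPolar c x (y + (x + x')) + cubicPolar c x' (y + (x + x'))
        = cubicPolar c x y + cubicPolar c x' y + 1 := by
    intro x x' hne y
    rw [cubicPolar_add_cubicPolar_add_right, cubicFormOfCoeffs, ← hc,
      h x x.2 x' x'.2 (Subtype.coe_injective.ne hne)]
  let e : (Fin n → ZMod 2) ≃ Fin (2 ^ n) := Fintype.equivFinOfCardEq (by simp)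
  exact ⟨_, (isSquareIdentity_linearCombination_signedShift _ _ hσ).reindex A.equivFin e e⟩

/-- If `α` is a cubic form on `𝔽₂ⁿ` and `A ⊆ 𝔽₂ⁿ` is a nonempty subset with
`α(x + x') = 1` for all distinct `x, x' ∈ A`, then there exists a sum-of-squares identity of
size `[|A|, 2ⁿ, 2ⁿ]`, i.e. a bilinear map `c : ℝ^{|A|} × ℝ^{2ⁿ} → ℝ^{2ⁿ}` with
`‖c(a,b)‖² = ‖a‖² ‖b‖²`. -/
theorem exists_square_identity_of_cubicForm
    (n : ℕ) (α : (Fin n → ZMod 2) → ZMod 2) (hα : IsCubicForm α)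
    (A : Finset (Fin n → ZMod 2)) (hA : A.Nonempty)
    (h : ∀ x ∈ A, ∀ x' ∈ A, x ≠ x' → α (x + x') = 1) :
    ∃ c : (Fin A.card → ℝ) →ₗ[ℝ] (Fin (2 ^ n) → ℝ) →ₗ[ℝ] (Fin (2 ^ n) → ℝ),
      ∀ (a : Fin A.card → ℝ) (b : Fin (2 ^ n) → ℝ),
        ∑ k, (c a b k) ^ 2 = (∑ i, (a i) ^ 2) * (∑ j, (b j) ^ 2) :=
  exists_square_identity_of_cubicForm_general n α hα A h
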